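/- The converse of the previous fails: the left-shift function F on ℝ[[X]] sending ∑_{k≥0} a_k X^k to ∑_{k≥0} a_{k+1} X^k is continuous everywhere in the order topology (given ε > 0 one may take η = ε·X), but F is not NS*-continuous. -/

import Mathlib

open PowerSeries

attribute [local instance] Classical.propDecidable

/-- `z` is positive for the lexicographic order on `ℝ[[X]]`. -/
def IsPos (z : PowerSeries ℝ) : Prop :=
  ∃ p : ℕ, (∀ k < p, coeff k z = 0) ∧ 0 < coeff p z

/-- The lexicographic order on `ℝ[[X]]`. -/
def lexLe (x y : PowerSeries ℝ) : Prop := x = y ∨ IsPos (y - x)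

/-- Strict lexicographic order. -/
def lexLt (x y : PowerSeries ℝ) : Prop := IsPos (y - x)

/-- Absolute value for the lexicographic order. -/
noncomputable def pabs (x : PowerSeries ℝ) : PowerSeries ℝ :=
  if lexLe 0 x then x else -x

/-- `a ≪ b` : `k·|a| < |b|` for all naturals `k`. -/
def muchLt (a b : PowerSeries ℝ) : Prop :=
  ∀ k : ℕ, lexLt ((k : PowerSeries ℝ) * pabs a) (pabs b)

/-- `F` is NS*-continuous: for no `x₁, x₂` does `|x₂ − x₁| ≪ |F x₂ − F x₁|` hold. -/
def NSStarContinuous (F : PowerSeries ℝ → PowerSeries ℝ) : Prop :=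
  ∀ x₁ x₂ : PowerSeries ℝ, ¬ muchLt (x₂ - x₁) (F x₂ - F x₁)

/-- `F` is continuous at `x₀` for the order topology (ε-η form). -/
def OrderContinuousAt (F : PowerSeries ℝ → PowerSeries ℝ) (x₀ : PowerSeries ℝ) : Prop :=
  ∀ ε : PowerSeries ℝ, lexLt 0 ε → ∃ η : PowerSeries ℝ, lexLt 0 η ∧
    ∀ x : PowerSeries ℝ, lexLt (pabs (x - x₀)) η → lexLt (pabs (F x - F x₀)) ε

/-- The left-shift map `∑ aₖ Xᵏ ↦ ∑ a_{k+1} Xᵏ`. -/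
noncomputable def shiftLeft (x : PowerSeries ℝ) : PowerSeries ℝ :=
  PowerSeries.mk fun k => coeff (k + 1) x

/-
The shift `F` is additive and `F (ε X) = ε`. It preserves the strict lexicographic order between
series with vanishing constant term, and `|d| < ε X` forces the constant term of `|d|` to vanish,
whence `|F d| = F |d| < F (ε X) = ε`. On the other hand `F X = 1`, while `k X < 1` for every `k`,
so `|X - 0| ≪ |F X - F 0|`.
-/

theorem shiftLeft_coeff (x : PowerSeries ℝ) (k : ℕ) :
    coeff k (shiftLeft x) = coeff (k + 1) x := by
  simp [shiftLeft]

theorem shiftLeft_zero : shiftLeft 0 = 0 := by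
  ext k; simp [shiftLeft_coeff]

theorem shiftLeft_neg (x : PowerSeries ℝ) : shiftLeft (-x) = -shiftLeft x := by
  ext k; simp [shiftLeft_coeff]

theorem shiftLeft_sub (x y : PowerSeries ℝ) :
    shiftLeft (x - y) = shiftLeft x - shiftLeft y := by
  ext k; simp [shiftLeft_coeff]

theorem shiftLeft_mul_X (x : PowerSeries ℝ) : shiftLeft (x * X) = x := by
  ext k; rw [shiftLeft_coeff, coeff_succ_mul_X]

theorem IsPos.not_isPos_neg {z : PowerSeries ℝ} (h : IsPos z) : ¬ IsPos (-z) := by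
  rintro ⟨q, hq, hqq⟩
  obtain ⟨p, hp, hpp⟩ := h
  simp only [map_neg, neg_eq_zero, neg_pos] at hq hqq
  rcases lt_trichotomy p q with hpq | rfl | hqp
  · linarith [hq p hpq]
  · linarith
  · linarith [hp q hqp]

theorem isPos_or_isPos_neg {z : PowerSeries ℝ} (hz : z ≠ 0) : IsPos z ∨ IsPos (-z) := by
  have hex : ∃ n, coeff n z ≠ 0 := by
    by_contra! h
    exact hz (PowerSeries.ext fun n => by simpa using h n)
  have hbelow : ∀ k < Nat.find hex, coeff k z = 0 := fun k hk => by
    simpa using Nat.find_min hex hk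
  rcases (Nat.find_spec hex).lt_or_gt with hneg | hpos
  · exact Or.inr ⟨_, fun k hk => by simp [hbelow k hk], by simpa using hneg⟩
  · exact Or.inl ⟨_, hbelow, hpos⟩

theorem IsPos.coeff_zero_nonneg {z : PowerSeries ℝ} (h : IsPos z) : 0 ≤ coeff 0 z := by
  obtain ⟨p, hp, hpp⟩ := h
  rcases Nat.eq_zero_or_pos p with rfl | hp0
  · exact hpp.le
  · exact (hp 0 hp0).ge

theorem IsPos.mul_X {z : PowerSeries ℝ} (h : IsPos z) : IsPos (z * X) := by
  obtain ⟨p, hp, hpp⟩ := h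
  refine ⟨p + 1, fun k hk => ?_, by rwa [coeff_succ_mul_X]⟩
  cases k with
  | zero => exact coeff_zero_mul_X z
  | succ j => rw [coeff_succ_mul_X]; exact hp j (by omega)

theorem IsPos.shiftLeft {z : PowerSeries ℝ} (h : IsPos z) (h0 : coeff 0 z = 0) :
    IsPos (shiftLeft z) := by
  obtain ⟨p, hp, hpp⟩ := h
  obtain ⟨q, rfl⟩ : ∃ q, p = q + 1 :=
    Nat.exists_eq_succ_of_ne_zero (by rintro rfl; linarith)
  exact ⟨q, fun k hk => by rw [shiftLeft_coeff]; exact hp _ (by omega),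
    by rwa [shiftLeft_coeff]⟩

theorem lexLe_zero_iff {z : PowerSeries ℝ} : lexLe 0 z ↔ z = 0 ∨ IsPos z := by
  rw [lexLe, sub_zero, eq_comm]

theorem lexLe_zero_or_lexLe_zero_neg (z : PowerSeries ℝ) : lexLe 0 z ∨ lexLe 0 (-z) := by
  simp only [lexLe_zero_iff, neg_eq_zero]
  by_cases hz : z = 0
  · exact Or.inl (Or.inl hz)
  · rcases isPos_or_isPos_neg hz with h | h
    · exact Or.inl (Or.inr h)
    · exact Or.inr (Or.inr h)

theorem eq_zero_of_lexLe_zero_of_lexLe_zero_neg {z : PowerSeries ℝ} (h : lexLe 0 z)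
    (hneg : lexLe 0 (-z)) : z = 0 := by
  rw [lexLe_zero_iff] at h hneg
  rcases h with h | h
  · exact h
  · exact neg_eq_zero.mp (hneg.resolve_right h.not_isPos_neg)

theorem coeff_zero_nonneg_of_lexLe_zero {z : PowerSeries ℝ} (h : lexLe 0 z) :
    0 ≤ coeff 0 z := by
  rcases lexLe_zero_iff.mp h with rfl | h
  · simp
  · exact h.coeff_zero_nonneg

theorem lexLe_zero_shiftLeft {z : PowerSeries ℝ} (h : lexLe 0 z) (h0 : coeff 0 z = 0) :
    lexLe 0 (shiftLeft z) := by
  rcases lexLe_zero_iff.mp h with rfl | h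
  · exact lexLe_zero_iff.mpr (Or.inl shiftLeft_zero)
  · exact lexLe_zero_iff.mpr (Or.inr (h.shiftLeft h0))

theorem lexLt_shiftLeft {a b : PowerSeries ℝ} (h : lexLt a b) (ha : coeff 0 a = 0)
    (hb : coeff 0 b = 0) : lexLt (shiftLeft a) (shiftLeft b) := by
  rw [lexLt, ← shiftLeft_sub]
  exact IsPos.shiftLeft h (by rw [map_sub, ha, hb, sub_zero])

theorem coeff_zero_eq_zero_of_lexLe_zero_of_lexLt {a b : PowerSeries ℝ} (ha : lexLe 0 a)
    (hab : lexLt a b) (hb : coeff 0 b = 0) : coeff 0 a = 0 := by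
  have h := IsPos.coeff_zero_nonneg hab
  rw [map_sub, hb] at h
  linarith [coeff_zero_nonneg_of_lexLe_zero ha]

theorem pabs_of_lexLe_zero {z : PowerSeries ℝ} (h : lexLe 0 z) : pabs z = z := if_pos h

theorem pabs_of_lexLe_zero_neg {z : PowerSeries ℝ} (h : lexLe 0 (-z)) : pabs z = -z := by
  by_cases hz : lexLe 0 z
  · rw [pabs_of_lexLe_zero hz, eq_zero_of_lexLe_zero_of_lexLe_zero_neg hz h, neg_zero]
  · exact if_neg hz

theorem pabs_eq_self_or_neg (z : PowerSeries ℝ) : pabs z = z ∨ pabs z = -z := by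
  unfold pabs; split <;> simp

theorem lexLe_zero_pabs (z : PowerSeries ℝ) : lexLe 0 (pabs z) := by
  rcases lexLe_zero_or_lexLe_zero_neg z with h | h
  · rwa [pabs_of_lexLe_zero h]
  · rwa [pabs_of_lexLe_zero_neg h]

theorem pabs_neg (z : PowerSeries ℝ) : pabs (-z) = pabs z := by
  rcases lexLe_zero_or_lexLe_zero_neg z with h | h
  · rw [pabs_of_lexLe_zero h, pabs_of_lexLe_zero_neg (by rwa [neg_neg]), neg_neg]
  · rw [pabs_of_lexLe_zero h, pabs_of_lexLe_zero_neg h]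

theorem pabs_shiftLeft_lexLt_of_pabs_lexLt_mul_X {d ε : PowerSeries ℝ}
    (h : lexLt (pabs d) (ε * X)) : lexLt (pabs (shiftLeft d)) ε := by
  have h0 : coeff 0 (pabs d) = 0 :=
    coeff_zero_eq_zero_of_lexLe_zero_of_lexLt (lexLe_zero_pabs d) h (coeff_zero_mul_X ε)
  have hshift : pabs (shiftLeft d) = shiftLeft (pabs d) := by
    have : pabs (shiftLeft d) = pabs (shiftLeft (pabs d)) := by
      rcases pabs_eq_self_or_neg d with hd | hd <;> rw [hd]
      rw [shiftLeft_neg, pabs_neg]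
    rw [this, pabs_of_lexLe_zero (lexLe_zero_shiftLeft (lexLe_zero_pabs d) h0)]
  rw [hshift, ← shiftLeft_mul_X ε]
  exact lexLt_shiftLeft h h0 (coeff_zero_mul_X ε)

theorem isPos_one : IsPos 1 := ⟨0, by simp, by simp⟩

theorem muchLt_X_one : muchLt X 1 := by
  intro k
  rw [pabs_of_lexLe_zero (lexLe_zero_iff.mpr (Or.inr (by simpa using isPos_one.mul_X))),
    pabs_of_lexLe_zero (lexLe_zero_iff.mpr (Or.inr isPos_one))]
  exact ⟨0, by simp, by simp⟩

/-- the left shift is continuous everywhere in the order topology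
(one may take `η = ε·X`), but it is not NS*-continuous. -/
theorem shiftLeft_orderContinuous_not_nsStarContinuous :
    (∀ x₀ : PowerSeries ℝ, OrderContinuousAt shiftLeft x₀) ∧
    (∀ (x₀ ε : PowerSeries ℝ), lexLt 0 ε →
      ∀ x : PowerSeries ℝ, lexLt (pabs (x - x₀)) (ε * X) →
        lexLt (pabs (shiftLeft x - shiftLeft x₀)) ε) ∧
    ¬ NSStarContinuous shiftLeft := by
  have hcont : ∀ x₀ ε x : PowerSeries ℝ, lexLt (pabs (x - x₀)) (ε * X) →
      lexLt (pabs (shiftLeft x - shiftLeft x₀)) ε := fun x₀ ε x hx => by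
    rw [← shiftLeft_sub]
    exact pabs_shiftLeft_lexLt_of_pabs_lexLt_mul_X hx
  refine ⟨fun x₀ ε hε => ⟨ε * X, ?_, hcont x₀ ε⟩, fun x₀ ε _ => hcont x₀ ε, fun h => h 0 X ?_⟩
  · rw [lexLt, sub_zero] at hε ⊢
    exact hε.mul_X
  · rw [sub_zero, ← one_mul X, shiftLeft_mul_X, shiftLeft_zero, sub_zero, one_mul]
    exact muchLt_X_one
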